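/- arXiv:2405.04420 — 2 statements merged into one kernel-verified Lean document; each statement's English description precedes it below -/
import Mathlib

section
/- For a function of the form g(β) = sup_{i ∈ I} (A_i - β·(A_i + B_i)) over a nonempty index set I with A_i ≥ 0, A_i + B_i ≥ δ > 0 for all i, and A_i, B_i uniformly bounded, g is antitone and Lipschitz continuous in β on [0,1], and g(β) = 0 iff β = sup_i A_i/(A_i + B_i). -/
theorem sup_mp_antitone_lipschitz_root
    {I : Type*} [Nonempty I] (A B : I → ℝ) (δ M : ℝ) (hδ : 0 < δ) (hM : 0 < M)
    (hA : ∀ i, 0 ≤ A i) (hB : ∀ i, 0 ≤ B i)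
    (hlow : ∀ i, δ ≤ A i + B i) (hup : ∀ i, A i + B i ≤ M)
    (g : ℝ → ℝ) (hg : ∀ β, g β = ⨆ i, (A i - β * (A i + B i))) :
    AntitoneOn g (Set.Icc 0 1) ∧
      LipschitzOnWith (Real.toNNReal M) g (Set.Icc 0 1) ∧
      ∀ β ∈ Set.Icc (0:ℝ) 1, (g β = 0 ↔ β = ⨆ i, A i / (A i + B i)) := by
  have hc : ∀ i, 0 < A i + B i := fun i => lt_of_lt_of_le hδ (hlow i)
  have hbdd : ∀ β : ℝ, BddAbove (Set.range fun i => A i - β * (A i + B i)) := by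
    intro β
    refine ⟨M + |β| * M, ?_⟩
    rintro x ⟨i, rfl⟩
    have h1 : A i ≤ M := le_trans (by linarith [hB i]) (hup i)
    have h2 : -(β * (A i + B i)) ≤ |β| * M := by
      nlinarith [neg_abs_le β, abs_nonneg β, hup i, (hc i).le]
    simp only
    linarith
  -- strict decrease quantitatively
  have key : ∀ β₁ β₂ : ℝ, β₁ ≤ β₂ → g β₂ ≤ g β₁ - δ * (β₂ - β₁) := by
    intro β₁ β₂ h12
    rw [hg β₂]
    refine ciSup_le fun i => ?_
    have ht : A i - β₁ * (A i + B i) ≤ g β₁ := by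
      rw [hg β₁]; exact le_ciSup (hbdd β₁) i
    nlinarith [hlow i]
  -- two-sided Lipschitz estimate
  have habs : ∀ β₁ β₂ : ℝ, g β₁ ≤ g β₂ + M * |β₁ - β₂| := by
    intro β₁ β₂
    rw [hg β₁]
    refine ciSup_le fun i => ?_
    have ht : A i - β₂ * (A i + B i) ≤ g β₂ := by
      rw [hg β₂]; exact le_ciSup (hbdd β₂) i
    have h3 : β₂ - β₁ ≤ |β₁ - β₂| := by
      rw [abs_sub_comm]; exact le_abs_self _
    nlinarith [abs_nonneg (β₁ - β₂), hup i, (hc i).le]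
  -- the candidate root
  set s : ℝ := ⨆ i, A i / (A i + B i) with hs
  have hrbdd : BddAbove (Set.range fun i => A i / (A i + B i)) := by
    refine ⟨1, ?_⟩
    rintro x ⟨i, rfl⟩
    exact div_le_one_of_le₀ (by linarith [hB i]) (hc i).le
  have hr_le_s : ∀ i, A i / (A i + B i) ≤ s := fun i => le_ciSup hrbdd i
  have hgs : g s = 0 := by
    have hle : g s ≤ 0 := by
      rw [hg s]
      refine ciSup_le fun i => ?_
      have h4 : A i / (A i + B i) * (A i + B i) ≤ s * (A i + B i) :=
        mul_le_mul_of_nonneg_right (hr_le_s i) (hc i).le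
      rw [div_mul_cancel₀ (A i) (ne_of_gt (hc i))] at h4
      linarith
    have hge : 0 ≤ g s := by
      by_contra hneg
      push_neg at hneg
      have hsle : s ≤ s + g s / M := by
        rw [hs]
        refine ciSup_le fun i => ?_
        have ht : A i - s * (A i + B i) ≤ g s := by
          rw [hg s]; exact le_ciSup (hbdd s) i
        have hmul : (A i / (A i + B i) - s) * M ≤ g s := by
          nlinarith [hr_le_s i, hup i, (hc i).le,
            div_mul_cancel₀ (A i) (ne_of_gt (hc i))]
        have := (le_div_iff₀ hM).mpr hmul
        linarith
      have : g s / M < 0 := div_neg_of_neg_of_pos hneg hM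
      linarith
    linarith
  refine ⟨?_, ?_, ?_⟩
  · intro β₁ _ β₂ _ h12
    have := key β₁ β₂ h12
    nlinarith [mul_nonneg hδ.le (sub_nonneg.mpr h12)]
  · refine LipschitzOnWith.of_dist_le_mul fun x _ y _ => ?_
    rw [Real.dist_eq, Real.dist_eq, Real.coe_toNNReal M hM.le]
    rw [abs_sub_le_iff]
    constructor
    · have := habs x y; linarith
    · have h := habs y x
      rw [abs_sub_comm] at h
      linarith
  · intro β _
    constructor
    · intro h0
      by_contra hne
      rcases lt_or_gt_of_ne hne with h | h
      · have := key β s h.le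
        nlinarith [mul_pos hδ (sub_pos.mpr h)]
      · have := key s β h.le
        nlinarith [mul_pos hδ (sub_pos.mpr h)]
    · intro h; rw [h]; exact hgs
end

section
/- With g as above (g(β) = sup_i (A_i - β·(A_i+B_i)), A_i ≥ 0, δ ≤ A_i + B_i ≤ M), if β ∈ [β* - ε, β*] where β* = sup_i A_i/(A_i+B_i), and index j attains the supremum g(β) = A_j - β·(A_j + B_j), then A_j/(A_j + B_j) ∈ [β* - ε, β*]. -/
theorem sup_attaining_index_ratio_close
    {I : Type*} [Nonempty I] (A B : I → ℝ) (δ M : ℝ) (hδ : 0 < δ) (hM : 0 < M)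
    (hA : ∀ i, 0 ≤ A i) (hB : ∀ i, 0 ≤ B i)
    (hlow : ∀ i, δ ≤ A i + B i) (hup : ∀ i, A i + B i ≤ M)
    (βs : ℝ) (hβs : βs = ⨆ i, A i / (A i + B i))
    (ε : ℝ) (hε : 0 < ε)
    (β : ℝ) (hβ : β ∈ Set.Icc (βs - ε) βs)
    (j : I) (hj : A j - β * (A j + B j) = ⨆ i, (A i - β * (A i + B i))) :
    A j / (A j + B j) ∈ Set.Icc (βs - ε) βs := by
  have hpos : ∀ i, 0 < A i + B i := fun i => lt_of_lt_of_le hδ (hlow i)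
  have hr1 : ∀ i, A i / (A i + B i) ≤ 1 := fun i =>
    (div_le_one (hpos i)).2 (by linarith [hB i])
  have hub : A j / (A j + B j) ≤ βs := by
    rw [hβs]
    exact le_ciSup (f := fun i => A i / (A i + B i)) ⟨1, by rintro x ⟨i, rfl⟩; exact hr1 i⟩ j
  have hbdd : BddAbove (Set.range fun i => A i - β * (A i + B i)) := by
    refine ⟨M + |β| * M, ?_⟩
    rintro x ⟨i, rfl⟩
    have h1 : A i ≤ M := le_trans (by linarith [hB i]) (hup i)
    have h2 : -(β * (A i + B i)) ≤ |β| * M := by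
      calc -(β * (A i + B i)) ≤ |β * (A i + B i)| := neg_le_abs _
        _ = |β| * |A i + B i| := abs_mul _ _
        _ ≤ |β| * M := by
            rw [abs_of_pos (hpos i)]
            exact mul_le_mul_of_nonneg_left (hup i) (abs_nonneg β)
    simp only []
    linarith
  have hgi : ∀ i, A i - β * (A i + B i) ≤ A j - β * (A j + B j) := by
    intro i; rw [hj]; exact le_ciSup hbdd i
  have hg0 : 0 ≤ A j - β * (A j + B j) := by
    by_contra h
    push_neg at h
    set g := A j - β * (A j + B j) with hg
    have htpos : 0 < -g / (2 * M) := div_pos (by linarith) (by linarith)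
    have hlt : β - -g / (2 * M) < ⨆ i, A i / (A i + B i) := by
      rw [← hβs]; linarith [hβ.2]
    obtain ⟨i, hi⟩ := exists_lt_of_lt_ciSup hlt
    rw [lt_div_iff₀ (hpos i)] at hi
    have hgle := hgi i
    have h1 := mul_le_mul_of_nonneg_left (hup i) htpos.le
    have h2 : -g / (2 * M) * M = -g / 2 := by field_simp
    nlinarith [h1, h2, hgle, hi]
  constructor
  · have : β ≤ A j / (A j + B j) := (le_div_iff₀ (hpos j)).2 (by linarith)
    linarith [hβ.1]
  · exact hub
end
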